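/- (Summation lemma for dyadic pieces) Let s > 0 and let N be the smallest integer with N > s. Suppose (f_k)_{k≥0} is a sequence in H^N(𝕋ⁿ) such that for every multi-index α with |α| ≤ N one has ‖∂^α f_k‖_{L²} ≤ 2^{k(|α|−s)} c_k with (c_k) ∈ ℓ². Then f = Σ_k f_k converges in H^s(𝕋ⁿ) and ‖f‖²_{H^s} ≤ C_s Σ_k c_k², where C_s depends only on s and n. -/
import Mathlib


open Real
noncomputable section

/-- Frequency lattice `ℤⁿ` of the torus `𝕋ⁿ`. -/
abbrev Zn (n : ℕ) := Fin n → ℤ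

/-- The lattice point `k` viewed as a real vector. -/
def znR {n : ℕ} (k : Zn n) : Fin n → ℝ := fun i => (k i : ℝ)

/-- `k·x`. -/
def dotZ {n : ℕ} (k : Zn n) (x : Fin n → ℝ) : ℝ := ∑ i, (k i : ℝ) * x i

/-- The function on `𝕋ⁿ` with Fourier coefficients `c`. -/
def fourierSeries {n : ℕ} (c : Zn n → ℂ) (x : Fin n → ℝ) : ℂ :=
  ∑' k : Zn n, c k * Complex.exp (Complex.I * ((dotZ k x : ℝ) : ℂ))

/-- `L^∞` norm of the function with Fourier coefficients `c`. -/
def LinfNorm {n : ℕ} (c : Zn n → ℂ) : ℝ := ⨆ x : Fin n → ℝ, ‖fourierSeries c x‖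

/-- Squared `L²` norm (by Plancherel). -/
def L2NormSq {n : ℕ} (c : Zn n → ℂ) : ℝ := ∑' k : Zn n, ‖c k‖ ^ 2

/-- Squared Sobolev `H^s` norm. -/
def HsNormSq {n : ℕ} (s : ℝ) (c : Zn n → ℂ) : ℝ :=
  ∑' k : Zn n, (1 + ‖znR k‖ ^ 2) ^ s * ‖c k‖ ^ 2

/-- Fourier coefficients of the partial derivative `∂^α`. -/
def pderivC {n : ℕ} (α : Fin n → ℕ) (c : Zn n → ℂ) : Zn n → ℂ :=
  fun k => (∏ i, (Complex.I * (k i : ℂ)) ^ (α i)) * c k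

/-- Convolution of Fourier coefficients (= coefficients of the pointwise product). -/
def convC {n : ℕ} (a b : Zn n → ℂ) : Zn n → ℂ :=
  fun k => ∑' l : Zn n, a l * b (k - l)

/-- Littlewood–Paley block `Δ_j` built from the dyadic bump `φ`;
`Δ_0 c` is the mean value. -/
def LPblock {n : ℕ} (φ : (Fin n → ℝ) → ℝ) (j : ℕ) (c : Zn n → ℂ) : Zn n → ℂ :=
  fun k => if j = 0 then (if k = 0 then c k else 0)
    else ((φ ((2 : ℝ) ^ (-(j : ℝ)) • znR k) : ℝ) : ℂ) * c k

/-- Littlewood–Paley partial sum `S_m = Σ_{l ≤ m} Δ_l` (with `S_m = Δ_0` for `m ≤ 0`). -/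
def LPpartial {n : ℕ} (φ : (Fin n → ℝ) → ℝ) (m : ℤ) (c : Zn n → ℂ) : Zn n → ℂ :=
  fun k => LPblock φ 0 c k + ∑ j ∈ Finset.range m.toNat, LPblock φ (j + 1) c k

/-- Para-product `T_a u = Σ_j S_{j−3} a · Δ_j u`, at the level of Fourier coefficients. -/
def paraProd {n : ℕ} (φ : (Fin n → ℝ) → ℝ) (a u : Zn n → ℂ) : Zn n → ℂ :=
  fun k => ∑' j : ℕ, convC (LPpartial φ ((j : ℤ) - 3) a) (LPblock φ j u) k

/-- Zygmund `C^r_*` norm: `sup_j 2^{jr} |Δ_j f|_{L^∞}`. -/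
def ZygNorm {n : ℕ} (φ : (Fin n → ℝ) → ℝ) (r : ℝ) (c : Zn n → ℂ) : ℝ :=
  ⨆ j : ℕ, (2 : ℝ) ^ ((j : ℝ) * r) * LinfNorm (LPblock φ j c)


lemma sl_sq_of_sqrt_le {x y : ℝ} (hx : 0 ≤ x) (h : Real.sqrt x ≤ y) : x ≤ y ^ 2 := by
  nlinarith [Real.sq_sqrt hx, Real.sqrt_nonneg x]

lemma sl_tsum_CS {a b : ℕ → ℝ} (ha : ∀ i, 0 ≤ a i) (hb : ∀ i, 0 ≤ b i)
    (hA : Summable fun i => a i ^ 2) (hB : Summable fun i => b i ^ 2) :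
    Summable (fun i => a i * b i) ∧
      (∑' i, a i * b i) ^ 2 ≤ (∑' i, a i ^ 2) * (∑' i, b i ^ 2) := by
  have hsum : Summable (fun i => a i * b i) := by
    refine Summable.of_nonneg_of_le (fun i => mul_nonneg (ha i) (hb i))
      (fun i => ?_) ((hA.add hB).div_const 2)
    nlinarith [sq_nonneg (a i - b i)]
  refine ⟨hsum, ?_⟩
  have hAn : (0:ℝ) ≤ ∑' i, a i ^ 2 := tsum_nonneg fun i => sq_nonneg _
  have hBn : (0:ℝ) ≤ ∑' i, b i ^ 2 := tsum_nonneg fun i => sq_nonneg _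
  have key : (∑' i, a i * b i) ≤ Real.sqrt (∑' i, a i ^ 2) * Real.sqrt (∑' i, b i ^ 2) := by
    refine Summable.tsum_le_of_sum_le hsum (fun S => ?_)
    have h1 : (∑ i ∈ S, a i * b i) ^ 2 ≤ (∑ i ∈ S, a i ^ 2) * (∑ i ∈ S, b i ^ 2) :=
      Finset.sum_mul_sq_le_sq_mul_sq S a b
    have h2 : (∑ i ∈ S, a i ^ 2) * (∑ i ∈ S, b i ^ 2)
        ≤ (∑' i, a i ^ 2) * (∑' i, b i ^ 2) := by
      apply mul_le_mul (Summable.sum_le_tsum S (fun i _ => sq_nonneg _) hA)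
        (Summable.sum_le_tsum S (fun i _ => sq_nonneg _) hB)
        (Finset.sum_nonneg fun i _ => sq_nonneg _) hAn
    calc (∑ i ∈ S, a i * b i) = Real.sqrt ((∑ i ∈ S, a i * b i) ^ 2) := by
            rw [Real.sqrt_sq (Finset.sum_nonneg fun i _ => mul_nonneg (ha i) (hb i))]
      _ ≤ Real.sqrt ((∑' i, a i ^ 2) * (∑' i, b i ^ 2)) :=
            Real.sqrt_le_sqrt (h1.trans h2)
      _ = _ := Real.sqrt_mul hAn _
  calc (∑' i, a i * b i) ^ 2
      ≤ (Real.sqrt (∑' i, a i ^ 2) * Real.sqrt (∑' i, b i ^ 2)) ^ 2 := by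
        apply pow_le_pow_left₀ (tsum_nonneg fun i => mul_nonneg (ha i) (hb i)) key
    _ = (∑' i, a i ^ 2) * (∑' i, b i ^ 2) := by
        rw [mul_pow, Real.sq_sqrt hAn, Real.sq_sqrt hBn]

lemma sl_weight_pow_le {n : ℕ} (N : ℕ) (hN : 1 ≤ N) (k : Zn n) :
    (1 + ‖znR k‖ ^ 2) ^ (N:ℝ) ≤ 2 ^ N * (1 + ∑ i, |(k i : ℝ)| ^ (2 * N)) := by
  have hw : (0:ℝ) ≤ ‖znR k‖ := norm_nonneg _
  have hmax : ‖znR k‖ ^ (2*N) ≤ ∑ i, |(k i : ℝ)| ^ (2 * N) := by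
    rcases Nat.eq_zero_or_pos n with hn | hn
    · subst hn
      have : znR k = 0 := Subsingleton.elim _ _
      rw [this, norm_zero, zero_pow (by omega)]
      simp
    · obtain ⟨i₀, -, hi₀⟩ := Finset.exists_max_image Finset.univ (fun i => |(k i : ℝ)|)
        ⟨⟨0, hn⟩, Finset.mem_univ _⟩
      have hnorm : ‖znR k‖ ≤ |(k i₀ : ℝ)| := by
        apply pi_norm_le_iff_of_nonneg (abs_nonneg _) |>.2
        intro i
        simpa [znR, Real.norm_eq_abs] using hi₀ i (Finset.mem_univ i)
      calc ‖znR k‖ ^ (2*N) ≤ |(k i₀ : ℝ)| ^ (2*N) := pow_le_pow_left₀ hw hnorm _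
        _ ≤ _ := Finset.single_le_sum (f := fun i => |(k i : ℝ)| ^ (2*N))
            (fun i _ => pow_nonneg (abs_nonneg _) _) (Finset.mem_univ i₀)
  rw [Real.rpow_natCast]
  have key : (1 + ‖znR k‖ ^ 2) ^ N ≤ 2 ^ N * (1 + ‖znR k‖ ^ (2*N)) := by
    rcases le_total (‖znR k‖ ^ 2) 1 with h | h
    · calc (1 + ‖znR k‖ ^ 2) ^ N ≤ (2:ℝ) ^ N := by
            apply pow_le_pow_left₀ (by positivity); linarith
        _ ≤ 2 ^ N * (1 + ‖znR k‖ ^ (2*N)) := by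
            nlinarith [pow_nonneg (pow_nonneg hw (2*N)) 1, pow_pos (zero_lt_two (α := ℝ)) N,
              pow_nonneg hw (2*N)]
    · calc (1 + ‖znR k‖ ^ 2) ^ N ≤ (2 * ‖znR k‖ ^ 2) ^ N := by
            apply pow_le_pow_left₀ (by positivity); linarith
        _ = 2 ^ N * ‖znR k‖ ^ (2*N) := by rw [mul_pow, ← pow_mul]
        _ ≤ 2 ^ N * (1 + ‖znR k‖ ^ (2*N)) := by
            have : (0:ℝ) < 2 ^ N := pow_pos zero_lt_two N
            nlinarith
  calc (1 + ‖znR k‖ ^ 2) ^ N ≤ 2 ^ N * (1 + ‖znR k‖ ^ (2*N)) := key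
    _ ≤ _ := by
        have : (0:ℝ) < 2 ^ N := pow_pos zero_lt_two N
        nlinarith


lemma sl_two_rpow_sq (a : ℝ) : ((2:ℝ) ^ a) ^ 2 = (2:ℝ) ^ (a * 2) := by
  rw [← Real.rpow_natCast ((2:ℝ) ^ a) 2, ← Real.rpow_mul (by norm_num : (0:ℝ) ≤ 2)]
  norm_num

lemma sl_two_rpow_geom (e : ℝ) (kk : ℕ) : (2:ℝ) ^ ((kk:ℝ) * e) = ((2:ℝ) ^ e) ^ kk := by
  rw [← Real.rpow_natCast ((2:ℝ) ^ e) kk, ← Real.rpow_mul (by norm_num : (0:ℝ) ≤ 2),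
    mul_comm]

lemma sl_four_pow (kk : ℕ) : ((4:ℝ) ^ kk) = (2:ℝ) ^ ((kk:ℝ) * 2) := by
  have h : ((kk:ℝ) * 2) = ((2 * kk : ℕ) : ℝ) := by push_cast; ring
  rw [h, Real.rpow_natCast, pow_mul]
  norm_num

lemma sl_rpow_half_sq (x e : ℝ) (hx : 0 < x) : (x ^ (e / 2)) ^ 2 = x ^ e := by
  rw [← Real.rpow_natCast (x ^ (e / 2)) 2, ← Real.rpow_mul hx.le]
  norm_num

lemma sl_sqrt_bound {x y cc : ℝ} (hx : 0 ≤ x) (hcc : 0 ≤ cc)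
    (h : Real.sqrt x ≤ (2:ℝ) ^ y * cc) : x ≤ (2:ℝ) ^ (y * 2) * cc ^ 2 := by
  have h2 : x ≤ ((2:ℝ) ^ y * cc) ^ 2 := by
    nlinarith [Real.sq_sqrt hx, Real.sqrt_nonneg x]
  calc x ≤ ((2:ℝ) ^ y * cc) ^ 2 := h2
    _ = (2:ℝ) ^ (y * 2) * cc ^ 2 := by rw [mul_pow, sl_two_rpow_sq]

lemma sl_div_rpow_neg (x y δ : ℝ) (hx : 0 < x) (hy : 0 < y) :
    (x / y) ^ (-δ) = (y / x) ^ δ := by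
  rw [Real.rpow_neg (by positivity), ← Real.inv_rpow (by positivity), inv_div]

lemma sl_min_inv (x y δ : ℝ) (hx : 0 ≤ x) (hy : 0 ≤ y) :
    (min x y) ^ (-δ) ≤ x ^ (-δ) + y ^ (-δ) := by
  rcases min_cases x y with ⟨h, -⟩ | ⟨h, -⟩ <;> rw [h]
  · linarith [Real.rpow_nonneg hy (-δ)]
  · linarith [Real.rpow_nonneg hx (-δ)]

lemma sl_pderiv_single {n : ℕ} (Nn : ℕ) (u : Zn n → ℂ) (i : Fin n) (k : Zn n) :
    ‖pderivC (fun i' => if i' = i then Nn else 0) u k‖ ^ 2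
      = |(k i : ℝ)| ^ (2 * Nn) * ‖u k‖ ^ 2 := by
  have hnorm : ∀ i' : Fin n, ‖Complex.I * ((k i' : ℤ) : ℂ)‖ = |(k i' : ℝ)| := by
    intro i'
    rw [norm_mul, Complex.norm_I, one_mul, Complex.norm_intCast]
  simp only [pderivC, norm_mul, norm_prod, norm_pow, hnorm]
  rw [mul_pow]
  congr 1
  have hprod : (∏ i' : Fin n, |(k i' : ℝ)| ^ (if i' = i then Nn else 0))
      = |(k i : ℝ)| ^ Nn := by
    rw [Finset.prod_congr rfl (fun i' _ => ?_)]
    · exact Finset.prod_ite_eq' Finset.univ i (fun i' => |(k i' : ℝ)| ^ Nn) |>.trans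
        (by simp)
    · exact pow_ite _ _ _ _ |>.trans (by rw [pow_zero])
  rw [hprod, ← pow_mul, mul_comm Nn 2]

lemma sl_interp {n : ℕ} (N : ℕ) (u : Zn n → ℂ) (r lam A B : ℝ)
    (hr0 : 0 ≤ r) (hrN : r ≤ (N:ℝ)) (hlam : 1 ≤ lam)
    (h2 : Summable fun k : Zn n => ‖u k‖ ^ 2)
    (hNs : Summable fun k : Zn n => (1 + ‖znR k‖ ^ 2) ^ (N:ℝ) * ‖u k‖ ^ 2)
    (hA : ∑' k : Zn n, ‖u k‖ ^ 2 ≤ A)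
    (hB : ∑' k : Zn n, (1 + ‖znR k‖ ^ 2) ^ (N:ℝ) * ‖u k‖ ^ 2 ≤ B) :
    Summable (fun k : Zn n => (1 + ‖znR k‖ ^ 2) ^ r * ‖u k‖ ^ 2) ∧
      ∑' k : Zn n, (1 + ‖znR k‖ ^ 2) ^ r * ‖u k‖ ^ 2
        ≤ lam ^ r * A + lam ^ (r - (N:ℝ)) * B := by
  have hlam0 : (0:ℝ) < lam := lt_of_lt_of_le one_pos hlam
  have key : ∀ k : Zn n, (1 + ‖znR k‖ ^ 2) ^ r
      ≤ lam ^ r + lam ^ (r - (N:ℝ)) * (1 + ‖znR k‖ ^ 2) ^ (N:ℝ) := by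
    intro k
    set w : ℝ := 1 + ‖znR k‖ ^ 2 with hw
    have hw1 : (1:ℝ) ≤ w := le_add_of_nonneg_right (sq_nonneg _)
    have hw0 : (0:ℝ) < w := lt_of_lt_of_le one_pos hw1
    rcases le_total w lam with h | h
    · have h1 : w ^ r ≤ lam ^ r := Real.rpow_le_rpow hw0.le h hr0
      have h2' : (0:ℝ) ≤ lam ^ (r - (N:ℝ)) * w ^ (N:ℝ) := by positivity
      linarith
    · have h1 : w ^ r = w ^ (r - (N:ℝ)) * w ^ (N:ℝ) := by
        rw [← Real.rpow_add hw0]; ring_nf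
      have h2' : w ^ (r - (N:ℝ)) ≤ lam ^ (r - (N:ℝ)) :=
        Real.rpow_le_rpow_of_nonpos hlam0 h (by linarith)
      have h3 : (0:ℝ) ≤ w ^ (N:ℝ) := by positivity
      have h4 : (0:ℝ) ≤ lam ^ r := by positivity
      nlinarith [mul_le_mul_of_nonneg_right h2' h3]
  have key2 : ∀ k : Zn n, (1 + ‖znR k‖ ^ 2) ^ r * ‖u k‖ ^ 2
      ≤ lam ^ r * ‖u k‖ ^ 2 + lam ^ (r - (N:ℝ)) * ((1 + ‖znR k‖ ^ 2) ^ (N:ℝ) * ‖u k‖ ^ 2) := by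
    intro k
    have := mul_le_mul_of_nonneg_right (key k) (sq_nonneg ‖u k‖)
    calc (1 + ‖znR k‖ ^ 2) ^ r * ‖u k‖ ^ 2
        ≤ (lam ^ r + lam ^ (r - (N:ℝ)) * (1 + ‖znR k‖ ^ 2) ^ (N:ℝ)) * ‖u k‖ ^ 2 := this
      _ = _ := by ring
  have hmaj : Summable (fun k : Zn n => lam ^ r * ‖u k‖ ^ 2
      + lam ^ (r - (N:ℝ)) * ((1 + ‖znR k‖ ^ 2) ^ (N:ℝ) * ‖u k‖ ^ 2)) :=
    (h2.mul_left _).add (hNs.mul_left _)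
  have hsum : Summable (fun k : Zn n => (1 + ‖znR k‖ ^ 2) ^ r * ‖u k‖ ^ 2) :=
    Summable.of_nonneg_of_le (fun k => by positivity) key2 hmaj
  refine ⟨hsum, ?_⟩
  calc ∑' k : Zn n, (1 + ‖znR k‖ ^ 2) ^ r * ‖u k‖ ^ 2
      ≤ ∑' k : Zn n, (lam ^ r * ‖u k‖ ^ 2
          + lam ^ (r - (N:ℝ)) * ((1 + ‖znR k‖ ^ 2) ^ (N:ℝ) * ‖u k‖ ^ 2)) :=
        Summable.tsum_le_tsum key2 hsum hmaj
    _ = lam ^ r * (∑' k : Zn n, ‖u k‖ ^ 2)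
        + lam ^ (r - (N:ℝ)) * ∑' k : Zn n, (1 + ‖znR k‖ ^ 2) ^ (N:ℝ) * ‖u k‖ ^ 2 := by
        rw [Summable.tsum_add (h2.mul_left _) (hNs.mul_left _), tsum_mul_left, tsum_mul_left]
    _ ≤ _ := by
        have h4 : (0:ℝ) ≤ lam ^ r := by positivity
        have h5 : (0:ℝ) ≤ lam ^ (r - (N:ℝ)) := by positivity
        exact add_le_add (mul_le_mul_of_nonneg_left hA h4) (mul_le_mul_of_nonneg_left hB h5)

lemma sl_theta (δ : ℝ) (hδ : 0 < δ) (w : ℝ) (hw : 1 ≤ w) :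
    Summable (fun kk : ℕ => min ((4:ℝ) ^ kk / w) (w / 4 ^ kk) ^ δ) ∧
      ∑' kk : ℕ, min ((4:ℝ) ^ kk / w) (w / 4 ^ kk) ^ δ ≤ 2 / (1 - (4:ℝ) ^ (-δ)) := by
  have hw0 : (0:ℝ) < w := lt_of_lt_of_le one_pos hw
  set ρ : ℝ := (4:ℝ) ^ (-δ) with hρdef
  have hρ0 : 0 < ρ := Real.rpow_pos_of_pos (by norm_num) _
  have hρ1 : ρ < 1 := Real.rpow_lt_one_of_one_lt_of_neg (by norm_num) (by linarith)
  have hρpow : ∀ j : ℕ, ((4:ℝ) ^ j)⁻¹ ^ δ = ρ ^ j := by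
    intro j
    rw [← Real.rpow_natCast (4:ℝ) j, ← Real.rpow_neg (by norm_num : (0:ℝ) ≤ 4),
      ← Real.rpow_natCast ρ j, hρdef, ← Real.rpow_mul (by norm_num : (0:ℝ) ≤ 4),
      ← Real.rpow_mul (by norm_num : (0:ℝ) ≤ 4)]
    ring_nf
  set m : ℕ := Nat.floor (Real.logb 4 w) with hm
  have hlogb0 : 0 ≤ Real.logb 4 w := Real.logb_nonneg (by norm_num) hw
  have h4m : (4:ℝ) ^ m ≤ w := by
    have h := Real.rpow_le_rpow_of_exponent_le (x := (4:ℝ)) (by norm_num)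
      (Nat.floor_le hlogb0)
    rwa [Real.rpow_natCast, Real.rpow_logb (by norm_num) (by norm_num) hw0] at h
  have hw4 : w ≤ (4:ℝ) ^ (m + 1) := by
    have h := Real.rpow_le_rpow_of_exponent_le (x := (4:ℝ)) (by norm_num)
      (le_of_lt (Nat.lt_floor_add_one (Real.logb 4 w)))
    rw [Real.rpow_logb (by norm_num) (by norm_num) hw0] at h
    calc w ≤ (4:ℝ) ^ ((m:ℝ) + 1) := by exact_mod_cast h
      _ = (4:ℝ) ^ (m + 1) := by
          rw [← Real.rpow_natCast (4:ℝ) (m+1)]; push_cast; ring_nf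
  set θ : ℕ → ℝ := fun kk => min ((4:ℝ) ^ kk / w) (w / 4 ^ kk) ^ δ with hθdef
  have hθ0 : ∀ kk, 0 ≤ θ kk := fun kk =>
    Real.rpow_nonneg (le_min (by positivity) (by positivity)) _
  set ψ : ℕ → ℝ := fun kk => if kk ≤ m then ρ ^ (m - kk) else ρ ^ (kk - m - 1) with hψdef
  have hθψ : ∀ kk, θ kk ≤ ψ kk := by
    intro kk
    rcases le_or_gt kk m with h | h
    · have h1 : θ kk ≤ ((4:ℝ) ^ kk / (4:ℝ) ^ m) ^ δ := by
        apply Real.rpow_le_rpow (le_min (by positivity) (by positivity))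
          ((min_le_left _ _).trans ?_) hδ.le
        exact div_le_div_of_nonneg_left (by positivity) (by positivity) h4m
      have h2 : (4:ℝ) ^ kk / (4:ℝ) ^ m = ((4:ℝ) ^ (m - kk))⁻¹ := by
        rw [div_eq_iff (by positivity), inv_mul_eq_div, eq_div_iff (by positivity),
          ← pow_add]
        congr 1
        omega
      rw [hψdef]
      simp only [if_pos h]
      rw [← hρpow]
      rw [h2] at h1
      exact h1
    · have h1 : θ kk ≤ ((4:ℝ) ^ (m+1) / (4:ℝ) ^ kk) ^ δ := by
        apply Real.rpow_le_rpow (le_min (by positivity) (by positivity))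
          ((min_le_right _ _).trans ?_) hδ.le
        exact (div_le_div_iff_of_pos_right (by positivity)).2 hw4
      have h2 : (4:ℝ) ^ (m+1) / (4:ℝ) ^ kk = ((4:ℝ) ^ (kk - m - 1))⁻¹ := by
        rw [div_eq_iff (by positivity), inv_mul_eq_div, eq_div_iff (by positivity),
          ← pow_add]
        congr 1
        omega
      rw [hψdef]
      simp only [if_neg (by omega : ¬ kk ≤ m)]
      rw [← hρpow]
      rw [h2] at h1
      exact h1
  have hψ0 : ∀ kk, 0 ≤ ψ kk := by
    intro kk
    simp only [hψdef]
    split_ifs <;> positivity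
  have htail : (fun j => ψ (j + (m + 1))) = fun j => ρ ^ j := by
    funext j
    rw [hψdef]
    simp only [if_neg (by omega : ¬ j + (m+1) ≤ m)]
    congr 1
    omega
  have hψsum : Summable ψ := by
    rw [← summable_nat_add_iff (m + 1), htail]
    exact summable_geometric_of_lt_one hρ0.le hρ1
  have hθsum : Summable θ := Summable.of_nonneg_of_le hθ0 hθψ hψsum
  refine ⟨hθsum, ?_⟩
  have hψval : ∑' kk, ψ kk ≤ 2 / (1 - ρ) := by
    rw [← Summable.sum_add_tsum_nat_add (m + 1) hψsum, htail,
      tsum_geometric_of_lt_one hρ0.le hρ1]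
    have hfin : ∑ kk ∈ Finset.range (m + 1), ψ kk = ∑ j ∈ Finset.range (m + 1), ρ ^ j := by
      rw [← Finset.sum_range_reflect (fun j => ρ ^ j) (m + 1)]
      apply Finset.sum_congr rfl
      intro kk hkk
      rw [Finset.mem_range] at hkk
      rw [hψdef]
      simp only [if_pos (by omega : kk ≤ m)]
      congr 1
    rw [hfin]
    have hgeo : ∑ j ∈ Finset.range (m + 1), ρ ^ j ≤ (1 - ρ)⁻¹ :=
      Summable.sum_le_tsum (Finset.range (m+1)) (fun j _ => by positivity)
        (summable_geometric_of_lt_one hρ0.le hρ1) |>.trans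
        (le_of_eq (tsum_geometric_of_lt_one hρ0.le hρ1))
    have h1ρ : 0 < 1 - ρ := by linarith
    rw [div_eq_mul_inv]
    linarith
  exact (Summable.tsum_le_tsum hθψ hθsum hψsum).trans hψval

set_option maxHeartbeats 1000000 in
/-- Summation lemma for dyadic pieces: if `‖∂^α f_k‖_{L²} ≤ 2^{k(|α|−s)} c_k`
for all `|α| ≤ N` (`N` the smallest integer `> s`, `s > 0`) with `(c_k) ∈ ℓ²`, then
`Σ_k f_k` converges in `H^s` and `‖Σ f_k‖²_{H^s} ≤ C_s Σ c_k²`. -/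
theorem summation_lemma (n : ℕ) (s : ℝ) (hs : 0 < s)
    (N : ℕ) (hN1 : s < N) (hN2 : ∀ m : ℕ, s < (m : ℝ) → N ≤ m) :
    ∃ C : ℝ, 0 < C ∧ ∀ (f : ℕ → Zn n → ℂ) (c : ℕ → ℝ),
      (∀ kk, 0 ≤ c kk) →
      Summable (fun kk : ℕ => c kk ^ 2) →
      (∀ (kk : ℕ) (α : Fin n → ℕ), (∑ i, α i) ≤ N →
        Summable (fun k : Zn n => ‖pderivC α (f kk) k‖ ^ 2)) →
      (∀ (kk : ℕ) (α : Fin n → ℕ), (∑ i, α i) ≤ N →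
        Real.sqrt (L2NormSq (pderivC α (f kk)))
          ≤ (2 : ℝ) ^ ((kk : ℝ) * ((∑ i, (α i : ℝ)) - s)) * c kk) →
      (∀ k : Zn n, Summable (fun kk : ℕ => f kk k)) ∧
      Summable (fun k : Zn n => (1 + ‖znR k‖ ^ 2) ^ s * ‖∑' kk : ℕ, f kk k‖ ^ 2) ∧
      HsNormSq s (fun k => ∑' kk : ℕ, f kk k) ≤ C * ∑' kk : ℕ, c kk ^ 2 := by
  classical
  have hN0 : (0:ℝ) < (N:ℝ) := lt_trans hs hN1
  set δ : ℝ := min s ((N:ℝ) - s) / 2 with hδdef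
  have hδ0 : 0 < δ := by
    have h1 : 0 < min s ((N:ℝ) - s) := lt_min hs (by linarith)
    positivity
  have hδs : δ < s := by
    have h1 : min s ((N:ℝ) - s) ≤ s := min_le_left _ _
    have := hδ0
    rw [hδdef] at *
    linarith
  have hδN : s + δ ≤ (N:ℝ) := by
    have h1 : min s ((N:ℝ) - s) ≤ (N:ℝ) - s := min_le_right _ _
    rw [hδdef]
    linarith
  set ρ : ℝ := (4:ℝ) ^ (-δ) with hρdef
  have hρ0 : 0 < ρ := Real.rpow_pos_of_pos (by norm_num) _
  have hρ1 : ρ < 1 := Real.rpow_lt_one_of_one_lt_of_neg (by norm_num) (by linarith)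
  set Θ : ℝ := 2 / (1 - ρ) with hΘdef
  have hΘ0 : 0 < Θ := by rw [hΘdef]; apply div_pos two_pos; linarith
  set K₂ : ℝ := 2 ^ N * (1 + (n:ℝ)) with hK₂def
  have hK₂0 : 0 < K₂ := by rw [hK₂def]; positivity
  set K₃ : ℝ := 1 + K₂ with hK₃def
  have hK₃0 : 0 < K₃ := by rw [hK₃def]; positivity
  refine ⟨Θ * (2 * K₃), by positivity, ?_⟩
  intro f c hc hcsum hsummable hbound
  have hN1' : 1 ≤ N := by
    have h : 0 < N := by exact_mod_cast hN0
    omega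
  -- α = 0 consequences
  have hp0 : ∀ kk, pderivC (fun _ => (0:ℕ)) (f kk) = f kk := by
    intro kk; funext k; simp [pderivC]
  have hsum0 : ∀ kk, Summable (fun k : Zn n => ‖f kk k‖ ^ 2) := by
    intro kk
    have h := hsummable kk (fun _ => 0) (by simp)
    rwa [hp0 kk] at h
  have hL2 : ∀ kk, ∑' k : Zn n, ‖f kk k‖ ^ 2
      ≤ (2:ℝ) ^ ((kk:ℝ) * (0 - s) * 2) * c kk ^ 2 := by
    intro kk
    have h := hbound kk (fun _ => 0) (by simp)
    rw [hp0 kk, show (∑ i : Fin n, (((0:ℕ)) : ℝ)) = 0 by simp] at h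
    simp only [L2NormSq] at h
    exact sl_sqrt_bound (tsum_nonneg fun k => sq_nonneg _) (hc kk) h
  -- α = N eᵢ consequences
  have hsumNi : ∀ (kk : ℕ) (i : Fin n),
      Summable (fun k : Zn n => |(k i : ℝ)| ^ (2 * N) * ‖f kk k‖ ^ 2) := by
    intro kk i
    have h := hsummable kk (fun i' => if i' = i then N else 0) (by simp)
    simpa only [sl_pderiv_single] using h
  have hL2Ni : ∀ (kk : ℕ) (i : Fin n),
      ∑' k : Zn n, |(k i : ℝ)| ^ (2 * N) * ‖f kk k‖ ^ 2
        ≤ (2:ℝ) ^ ((kk:ℝ) * ((N:ℝ) - s) * 2) * c kk ^ 2 := by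
    intro kk i
    have h := hbound kk (fun i' => if i' = i then N else 0) (by simp)
    rw [show (∑ i' : Fin n, (((if i' = i then N else 0 : ℕ)) : ℝ)) = (N:ℝ) by simp] at h
    simp only [L2NormSq, sl_pderiv_single] at h
    exact sl_sqrt_bound (tsum_nonneg fun k => by positivity) (hc kk) h
  -- weight-N bounds
  have hwle : ∀ (kk : ℕ) (k : Zn n), (1 + ‖znR k‖ ^ 2) ^ (N:ℝ) * ‖f kk k‖ ^ 2
      ≤ (2:ℝ) ^ N * (‖f kk k‖ ^ 2 + ∑ i, |(k i : ℝ)| ^ (2 * N) * ‖f kk k‖ ^ 2) := by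
    intro kk k
    calc (1 + ‖znR k‖ ^ 2) ^ (N:ℝ) * ‖f kk k‖ ^ 2
        ≤ (2 ^ N * (1 + ∑ i, |(k i : ℝ)| ^ (2 * N))) * ‖f kk k‖ ^ 2 :=
          mul_le_mul_of_nonneg_right (sl_weight_pow_le N hN1' k) (sq_nonneg _)
      _ = _ := by rw [mul_assoc, add_mul, one_mul, Finset.sum_mul]
  have hmajN : ∀ kk, Summable (fun k : Zn n =>
      ‖f kk k‖ ^ 2 + ∑ i, |(k i : ℝ)| ^ (2 * N) * ‖f kk k‖ ^ 2) :=
    fun kk => (hsum0 kk).add (summable_sum (fun i _ => hsumNi kk i))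
  have hsumN : ∀ kk, Summable (fun k : Zn n => (1 + ‖znR k‖ ^ 2) ^ (N:ℝ) * ‖f kk k‖ ^ 2) := by
    intro kk
    exact Summable.of_nonneg_of_le (fun k => by positivity) (hwle kk)
      ((hmajN kk).mul_left _)
  have hL2N : ∀ kk, ∑' k : Zn n, (1 + ‖znR k‖ ^ 2) ^ (N:ℝ) * ‖f kk k‖ ^ 2
      ≤ K₂ * ((2:ℝ) ^ ((kk:ℝ) * ((N:ℝ) - s) * 2) * c kk ^ 2) := by
    intro kk
    have step1 := Summable.tsum_le_tsum (hwle kk) (hsumN kk) (((hmajN kk).mul_left ((2:ℝ)^N)))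
    rw [tsum_mul_left, Summable.tsum_add (hsum0 kk) (summable_sum (fun i _ => hsumNi kk i)),
      Summable.tsum_finsetSum (fun i _ => hsumNi kk i)] at step1
    have hb0 : ∑' k : Zn n, ‖f kk k‖ ^ 2
        ≤ (2:ℝ) ^ ((kk:ℝ) * ((N:ℝ) - s) * 2) * c kk ^ 2 := by
      refine (hL2 kk).trans (mul_le_mul_of_nonneg_right ?_ (sq_nonneg _))
      apply Real.rpow_le_rpow_of_exponent_le one_le_two
      nlinarith [mul_nonneg (Nat.cast_nonneg kk : (0:ℝ) ≤ (kk:ℝ)) hN0.le]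
    have hbi : ∑ i : Fin n, ∑' k : Zn n, |(k i : ℝ)| ^ (2 * N) * ‖f kk k‖ ^ 2
        ≤ (n:ℝ) * ((2:ℝ) ^ ((kk:ℝ) * ((N:ℝ) - s) * 2) * c kk ^ 2) := by
      calc ∑ i : Fin n, ∑' k : Zn n, |(k i : ℝ)| ^ (2 * N) * ‖f kk k‖ ^ 2
          ≤ ∑ _i : Fin n, (2:ℝ) ^ ((kk:ℝ) * ((N:ℝ) - s) * 2) * c kk ^ 2 :=
            Finset.sum_le_sum (fun i _ => hL2Ni kk i)
        _ = _ := by rw [Finset.sum_const, Finset.card_univ, Fintype.card_fin,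
            nsmul_eq_mul]
    calc ∑' k : Zn n, (1 + ‖znR k‖ ^ 2) ^ (N:ℝ) * ‖f kk k‖ ^ 2
        ≤ (2:ℝ) ^ N * ((∑' k : Zn n, ‖f kk k‖ ^ 2)
            + ∑ i : Fin n, ∑' k : Zn n, |(k i : ℝ)| ^ (2 * N) * ‖f kk k‖ ^ 2) := step1
      _ ≤ (2:ℝ) ^ N * (((2:ℝ) ^ ((kk:ℝ) * ((N:ℝ) - s) * 2) * c kk ^ 2)
            + (n:ℝ) * ((2:ℝ) ^ ((kk:ℝ) * ((N:ℝ) - s) * 2) * c kk ^ 2)) := by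
          have h2N : (0:ℝ) ≤ (2:ℝ) ^ N := by positivity
          exact mul_le_mul_of_nonneg_left (add_le_add hb0 hbi) h2N
      _ = K₂ * ((2:ℝ) ^ ((kk:ℝ) * ((N:ℝ) - s) * 2) * c kk ^ 2) := by
          rw [hK₂def]; ring
  -- interpolation
  have hS : ∀ (kk : ℕ) (r : ℝ), 0 ≤ r → r ≤ (N:ℝ) →
      Summable (fun k : Zn n => (1 + ‖znR k‖ ^ 2) ^ r * ‖f kk k‖ ^ 2) ∧
      ∑' k : Zn n, (1 + ‖znR k‖ ^ 2) ^ r * ‖f kk k‖ ^ 2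
        ≤ K₃ * ((2:ℝ) ^ ((kk:ℝ) * (r - s) * 2) * c kk ^ 2) := by
    intro kk r hr0 hrN
    have hlam : (1:ℝ) ≤ (2:ℝ) ^ ((kk:ℝ) * 2) := by
      rw [show (1:ℝ) = (2:ℝ) ^ (0:ℝ) by rw [Real.rpow_zero]]
      exact Real.rpow_le_rpow_of_exponent_le one_le_two (by positivity)
    obtain ⟨hsum, hle⟩ := sl_interp N (f kk) r ((2:ℝ) ^ ((kk:ℝ) * 2))
      ((2:ℝ) ^ ((kk:ℝ) * (0 - s) * 2) * c kk ^ 2)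
      (K₂ * ((2:ℝ) ^ ((kk:ℝ) * ((N:ℝ) - s) * 2) * c kk ^ 2))
      hr0 hrN hlam (hsum0 kk) (hsumN kk) (hL2 kk) (hL2N kk)
    refine ⟨hsum, hle.trans (le_of_eq ?_)⟩
    have h1 : ((2:ℝ) ^ ((kk:ℝ) * 2)) ^ r = (2:ℝ) ^ ((kk:ℝ) * 2 * r) :=
      (Real.rpow_mul (by norm_num) _ _).symm
    have h2 : ((2:ℝ) ^ ((kk:ℝ) * 2)) ^ (r - (N:ℝ)) = (2:ℝ) ^ ((kk:ℝ) * 2 * (r - (N:ℝ))) :=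
      (Real.rpow_mul (by norm_num) _ _).symm
    rw [h1, h2]
    have e1 : (2:ℝ) ^ ((kk:ℝ) * 2 * r) * (2:ℝ) ^ ((kk:ℝ) * (0 - s) * 2)
        = (2:ℝ) ^ ((kk:ℝ) * (r - s) * 2) := by
      rw [← Real.rpow_add two_pos]; congr 1; ring
    have e2 : (2:ℝ) ^ ((kk:ℝ) * 2 * (r - (N:ℝ))) * (2:ℝ) ^ ((kk:ℝ) * ((N:ℝ) - s) * 2)
        = (2:ℝ) ^ ((kk:ℝ) * (r - s) * 2) := by
      rw [← Real.rpow_add two_pos]; congr 1; ring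
    rw [hK₃def]
    linear_combination (c kk ^ 2) * e1 + (K₂ * c kk ^ 2) * e2
  -- pointwise coefficient bound
  have hgpt : ∀ (kk : ℕ) (k : Zn n), ‖f kk k‖ ≤ (2:ℝ) ^ ((kk:ℝ) * (0 - s)) * c kk := by
    intro kk k
    have h1 : ‖f kk k‖ ^ 2 ≤ ∑' k' : Zn n, ‖f kk k'‖ ^ 2 :=
      Summable.le_tsum (hsum0 kk) k (fun j _ => sq_nonneg _)
    have h2 := hbound kk (fun _ => 0) (by simp)
    rw [hp0 kk, show (∑ _i : Fin n, ((0:ℕ) : ℝ)) = 0 by simp] at h2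
    simp only [L2NormSq] at h2
    calc ‖f kk k‖ = Real.sqrt (‖f kk k‖ ^ 2) := (Real.sqrt_sq (norm_nonneg _)).symm
      _ ≤ Real.sqrt (∑' k' : Zn n, ‖f kk k'‖ ^ 2) := Real.sqrt_le_sqrt h1
      _ ≤ _ := h2
  have hgeom : Summable (fun kk : ℕ => ((2:ℝ) ^ ((0 - s) * 2)) ^ kk) :=
    summable_geometric_of_lt_one (by positivity)
      (Real.rpow_lt_one_of_one_lt_of_neg one_lt_two (by linarith))
  have hcs : Summable (fun kk : ℕ => (2:ℝ) ^ ((kk:ℝ) * (0 - s)) * c kk) := by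
    apply Summable.of_nonneg_of_le
      (fun kk => mul_nonneg (Real.rpow_nonneg (by norm_num) _) (hc kk)) (fun kk => ?_)
      ((hgeom.add hcsum).div_const 2)
    have hx : ((2:ℝ) ^ ((kk:ℝ) * (0 - s))) ^ 2 = ((2:ℝ) ^ ((0 - s) * 2)) ^ kk := by
      rw [sl_two_rpow_sq, ← sl_two_rpow_geom]
      congr 1; ring
    nlinarith [sq_nonneg ((2:ℝ) ^ ((kk:ℝ) * (0 - s)) - c kk), hx, hc kk]
  have hnormsum : ∀ k : Zn n, Summable (fun kk : ℕ => ‖f kk k‖) := fun k =>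
    Summable.of_nonneg_of_le (fun kk => norm_nonneg _) (fun kk => hgpt kk k) hcs
  have hconv : ∀ k : Zn n, Summable (fun kk : ℕ => f kk k) :=
    fun k => Summable.of_norm (hnormsum k)
  -- the weighted pieces
  set H : ℕ → Zn n → ℝ := fun kk k => (1 + ‖znR k‖ ^ 2) ^ s *
    ((min ((4:ℝ) ^ kk / (1 + ‖znR k‖ ^ 2)) ((1 + ‖znR k‖ ^ 2) / (4:ℝ) ^ kk)) ^ (-δ)
      * ‖f kk k‖ ^ 2) with hHdef
  have hmin0 : ∀ (kk : ℕ) (k : Zn n),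
      0 < min ((4:ℝ) ^ kk / (1 + ‖znR k‖ ^ 2)) ((1 + ‖znR k‖ ^ 2) / (4:ℝ) ^ kk) := by
    intro kk k
    have h1 : (0:ℝ) < 1 + ‖znR k‖ ^ 2 := by positivity
    exact lt_min (by positivity) (by positivity)
  have hH0 : ∀ kk k, 0 ≤ H kk k := by
    intro kk k
    simp only [hHdef]
    exact mul_nonneg (Real.rpow_nonneg (by positivity) _)
      (mul_nonneg (Real.rpow_nonneg (hmin0 kk k).le _) (sq_nonneg _))
  -- per-frequency Cauchy–Schwarz estimate
  have perk : ∀ k : Zn n, (1 + ‖znR k‖ ^ 2) ^ s * ‖∑' kk : ℕ, f kk k‖ ^ 2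
      ≤ Θ * ∑' kk : ℕ, H kk k := by
    intro k
    set W : ℝ := 1 + ‖znR k‖ ^ 2 with hWdef
    have hW1 : (1:ℝ) ≤ W := le_add_of_nonneg_right (sq_nonneg _)
    have hW0 : (0:ℝ) < W := lt_of_lt_of_le one_pos hW1
    have hm0 : ∀ kk : ℕ, 0 < min ((4:ℝ) ^ kk / W) (W / (4:ℝ) ^ kk) := fun kk => hmin0 kk k
    obtain ⟨hθsum, hθle⟩ := sl_theta δ hδ0 W hW1
    set a : ℕ → ℝ := fun kk => (min ((4:ℝ) ^ kk / W) (W / (4:ℝ) ^ kk)) ^ (δ / 2) with hadef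
    set b : ℕ → ℝ := fun kk =>
      (min ((4:ℝ) ^ kk / W) (W / (4:ℝ) ^ kk)) ^ (-(δ / 2)) * ‖f kk k‖ with hbdef
    have ha0 : ∀ kk, 0 ≤ a kk := fun kk => Real.rpow_nonneg (hm0 kk).le _
    have hb0' : ∀ kk, 0 ≤ b kk :=
      fun kk => mul_nonneg (Real.rpow_nonneg (hm0 kk).le _) (norm_nonneg _)
    have hab : ∀ kk, a kk * b kk = ‖f kk k‖ := by
      intro kk
      simp only [hadef, hbdef]
      rw [← mul_assoc, ← Real.rpow_add (hm0 kk)]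
      norm_num
    have ha2 : ∀ kk, a kk ^ 2 = (min ((4:ℝ) ^ kk / W) (W / (4:ℝ) ^ kk)) ^ δ := by
      intro kk
      simp only [hadef]
      exact sl_rpow_half_sq _ _ (hm0 kk)
    have hb2 : ∀ kk, b kk ^ 2
        = (min ((4:ℝ) ^ kk / W) (W / (4:ℝ) ^ kk)) ^ (-δ) * ‖f kk k‖ ^ 2 := by
      intro kk
      simp only [hbdef]
      rw [mul_pow]
      congr 1
      have h := sl_rpow_half_sq (min ((4:ℝ) ^ kk / W) (W / (4:ℝ) ^ kk)) (-δ) (hm0 kk)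
      rw [← h]
      congr 2
      ring
    have ha2sum : Summable (fun kk => a kk ^ 2) := by
      rw [show (fun kk => a kk ^ 2)
        = fun kk : ℕ => (min ((4:ℝ) ^ kk / W) (W / (4:ℝ) ^ kk)) ^ δ from funext ha2]
      exact hθsum
    have hb2sum : Summable (fun kk => b kk ^ 2) := by
      apply Summable.of_nonneg_of_le (fun kk => sq_nonneg _) (fun kk => ?_)
        (hcsum.mul_left (W ^ δ + 1))
      rw [hb2 kk]
      have hgsq : ‖f kk k‖ ^ 2 ≤ (2:ℝ) ^ ((kk:ℝ) * (0 - s) * 2) * c kk ^ 2 := by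
        calc ‖f kk k‖ ^ 2 ≤ ((2:ℝ) ^ ((kk:ℝ) * (0 - s)) * c kk) ^ 2 :=
              pow_le_pow_left₀ (norm_nonneg _) (hgpt kk k) 2
          _ = _ := by rw [mul_pow, sl_two_rpow_sq]
      have h1 : (2:ℝ) ^ ((kk:ℝ) * (0 - s) * 2) ≤ 1 := by
        apply Real.rpow_le_one_of_one_le_of_nonpos one_le_two
        nlinarith [mul_nonneg (Nat.cast_nonneg kk : (0:ℝ) ≤ (kk:ℝ)) hs.le]
      have h2 : ((4:ℝ) ^ kk) ^ δ * (2:ℝ) ^ ((kk:ℝ) * (0 - s) * 2) ≤ 1 := by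
        rw [sl_four_pow, ← Real.rpow_mul (by norm_num : (0:ℝ) ≤ 2),
          ← Real.rpow_add two_pos]
        apply Real.rpow_le_one_of_one_le_of_nonpos one_le_two
        nlinarith [mul_nonneg (Nat.cast_nonneg kk : (0:ℝ) ≤ (kk:ℝ)) (by linarith : (0:ℝ) ≤ s - δ)]
      have hsplit : (min ((4:ℝ) ^ kk / W) (W / (4:ℝ) ^ kk)) ^ (-δ)
          ≤ W ^ δ + ((4:ℝ) ^ kk) ^ δ := by
        refine (sl_min_inv _ _ δ (by positivity) (by positivity)).trans ?_
        rw [sl_div_rpow_neg _ _ δ (by positivity) hW0, sl_div_rpow_neg _ _ δ hW0 (by positivity)]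
        apply add_le_add
        · apply Real.rpow_le_rpow (by positivity) ?_ hδ0.le
          calc W / (4:ℝ) ^ kk ≤ W / 1 :=
                div_le_div_of_nonneg_left hW0.le one_pos (one_le_pow₀ (by norm_num))
            _ = W := div_one W
        · apply Real.rpow_le_rpow (by positivity) ?_ hδ0.le
          calc (4:ℝ) ^ kk / W ≤ (4:ℝ) ^ kk / 1 :=
                div_le_div_of_nonneg_left (by positivity) one_pos hW1
            _ = (4:ℝ) ^ kk := div_one _
      calc (min ((4:ℝ) ^ kk / W) (W / (4:ℝ) ^ kk)) ^ (-δ) * ‖f kk k‖ ^ 2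
          ≤ (W ^ δ + ((4:ℝ) ^ kk) ^ δ) * ((2:ℝ) ^ ((kk:ℝ) * (0 - s) * 2) * c kk ^ 2) :=
            mul_le_mul hsplit hgsq (sq_nonneg _) (by positivity)
        _ = W ^ δ * ((2:ℝ) ^ ((kk:ℝ) * (0 - s) * 2) * c kk ^ 2)
            + (((4:ℝ) ^ kk) ^ δ * (2:ℝ) ^ ((kk:ℝ) * (0 - s) * 2)) * c kk ^ 2 := by ring
        _ ≤ W ^ δ * (1 * c kk ^ 2) + 1 * c kk ^ 2 := by
            apply add_le_add
            · exact mul_le_mul_of_nonneg_left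
                (mul_le_mul_of_nonneg_right h1 (sq_nonneg _)) (Real.rpow_nonneg hW0.le δ)
            · exact mul_le_mul_of_nonneg_right h2 (sq_nonneg _)
        _ = (W ^ δ + 1) * c kk ^ 2 := by ring
    obtain ⟨habsum, hCS⟩ := sl_tsum_CS ha0 hb0' ha2sum hb2sum
    rw [tsum_congr hab] at hCS
    have hSa : ∑' kk, a kk ^ 2 ≤ Θ := by
      rw [tsum_congr ha2, hΘdef, hρdef]
      exact hθle
    have hSb0 : (0:ℝ) ≤ ∑' kk, b kk ^ 2 := tsum_nonneg fun kk => sq_nonneg _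
    have hF : ‖∑' kk, f kk k‖ ≤ ∑' kk, ‖f kk k‖ := norm_tsum_le_tsum_norm (hnormsum k)
    have hFsq : ‖∑' kk, f kk k‖ ^ 2 ≤ Θ * ∑' kk, b kk ^ 2 := by
      calc ‖∑' kk, f kk k‖ ^ 2 ≤ (∑' kk, ‖f kk k‖) ^ 2 :=
            pow_le_pow_left₀ (norm_nonneg _) hF 2
        _ ≤ (∑' kk, a kk ^ 2) * (∑' kk, b kk ^ 2) := hCS
        _ ≤ Θ * (∑' kk, b kk ^ 2) := mul_le_mul_of_nonneg_right hSa hSb0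
    calc W ^ s * ‖∑' kk, f kk k‖ ^ 2 ≤ W ^ s * (Θ * ∑' kk, b kk ^ 2) :=
          mul_le_mul_of_nonneg_left hFsq (Real.rpow_nonneg hW0.le s)
      _ = Θ * ∑' kk, W ^ s * b kk ^ 2 := by rw [tsum_mul_left]; ring
      _ = Θ * ∑' kk, H kk k := by
          congr 1
          apply tsum_congr
          intro kk
          rw [hb2 kk]
  -- split bounds for H
  have hSp : ∀ kk : ℕ, Summable (fun k : Zn n => (1 + ‖znR k‖ ^ 2) ^ (s + δ) * ‖f kk k‖ ^ 2) ∧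
      ∑' k : Zn n, (1 + ‖znR k‖ ^ 2) ^ (s + δ) * ‖f kk k‖ ^ 2
        ≤ K₃ * ((2:ℝ) ^ ((kk:ℝ) * ((s + δ) - s) * 2) * c kk ^ 2) :=
    fun kk => hS kk (s + δ) (by linarith) hδN
  have hSm : ∀ kk : ℕ, Summable (fun k : Zn n => (1 + ‖znR k‖ ^ 2) ^ (s - δ) * ‖f kk k‖ ^ 2) ∧
      ∑' k : Zn n, (1 + ‖znR k‖ ^ 2) ^ (s - δ) * ‖f kk k‖ ^ 2
        ≤ K₃ * ((2:ℝ) ^ ((kk:ℝ) * ((s - δ) - s) * 2) * c kk ^ 2) :=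
    fun kk => hS kk (s - δ) (by linarith) (by linarith)
  have hH'sum : ∀ kk : ℕ, Summable (fun k : Zn n =>
      (2:ℝ) ^ ((kk:ℝ) * (-δ) * 2) * ((1 + ‖znR k‖ ^ 2) ^ (s + δ) * ‖f kk k‖ ^ 2)
      + (2:ℝ) ^ ((kk:ℝ) * δ * 2) * ((1 + ‖znR k‖ ^ 2) ^ (s - δ) * ‖f kk k‖ ^ 2)) :=
    fun kk => (((hSp kk).1).mul_left _).add (((hSm kk).1).mul_left _)
  have hHH' : ∀ (kk : ℕ) (k : Zn n), H kk k
      ≤ (2:ℝ) ^ ((kk:ℝ) * (-δ) * 2) * ((1 + ‖znR k‖ ^ 2) ^ (s + δ) * ‖f kk k‖ ^ 2)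
      + (2:ℝ) ^ ((kk:ℝ) * δ * 2) * ((1 + ‖znR k‖ ^ 2) ^ (s - δ) * ‖f kk k‖ ^ 2) := by
    intro kk k
    set W : ℝ := 1 + ‖znR k‖ ^ 2 with hWdef
    have hW1 : (1:ℝ) ≤ W := le_add_of_nonneg_right (sq_nonneg _)
    have hW0 : (0:ℝ) < W := lt_of_lt_of_le one_pos hW1
    have h40 : (0:ℝ) < (4:ℝ) ^ kk := by positivity
    have hmin : (min ((4:ℝ) ^ kk / W) (W / (4:ℝ) ^ kk)) ^ (-δ)
        ≤ ((4:ℝ) ^ kk / W) ^ (-δ) + (W / (4:ℝ) ^ kk) ^ (-δ) :=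
      sl_min_inv _ _ δ (by positivity) (by positivity)
    have t1 : ((4:ℝ) ^ kk) ^ δ = (2:ℝ) ^ ((kk:ℝ) * 2 * δ) := by
      rw [sl_four_pow, ← Real.rpow_mul (by norm_num : (0:ℝ) ≤ 2)]
    have e1 : W ^ s * ((4:ℝ) ^ kk / W) ^ (-δ) = (2:ℝ) ^ ((kk:ℝ) * (-δ) * 2) * W ^ (s + δ) := by
      rw [sl_div_rpow_neg _ _ δ h40 hW0, Real.div_rpow hW0.le h40.le, t1,
        div_eq_mul_inv, ← Real.rpow_neg (by norm_num : (0:ℝ) ≤ 2),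
        show -((kk:ℝ) * 2 * δ) = (kk:ℝ) * (-δ) * 2 by ring,
        Real.rpow_add hW0 s δ]
      ring
    have e2 : W ^ s * (W / (4:ℝ) ^ kk) ^ (-δ) = (2:ℝ) ^ ((kk:ℝ) * δ * 2) * W ^ (s - δ) := by
      rw [sl_div_rpow_neg _ _ δ hW0 h40, Real.div_rpow h40.le hW0.le, t1,
        div_eq_mul_inv, ← Real.rpow_neg hW0.le,
        show (kk:ℝ) * 2 * δ = (kk:ℝ) * δ * 2 by ring,
        show s - δ = s + (-δ) by ring, Real.rpow_add hW0 s (-δ)]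
      ring
    have hfin := mul_le_mul_of_nonneg_right
      (mul_le_mul_of_nonneg_left hmin (Real.rpow_nonneg hW0.le s)) (sq_nonneg ‖f kk k‖)
    calc H kk k
        = (W ^ s * (min ((4:ℝ) ^ kk / W) (W / (4:ℝ) ^ kk)) ^ (-δ)) * ‖f kk k‖ ^ 2 := by
          simp only [hHdef, ← hWdef]; ring
      _ ≤ (W ^ s * (((4:ℝ) ^ kk / W) ^ (-δ) + (W / (4:ℝ) ^ kk) ^ (-δ))) * ‖f kk k‖ ^ 2 := hfin
      _ = (W ^ s * ((4:ℝ) ^ kk / W) ^ (-δ)) * ‖f kk k‖ ^ 2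
          + (W ^ s * (W / (4:ℝ) ^ kk) ^ (-δ)) * ‖f kk k‖ ^ 2 := by ring
      _ = _ := by rw [e1, e2]; ring
  have hHsum_k : ∀ kk : ℕ, Summable (fun k : Zn n => H kk k) :=
    fun kk => Summable.of_nonneg_of_le (hH0 kk) (hHH' kk) (hH'sum kk)
  have hHk_le : ∀ kk : ℕ, ∑' k : Zn n, H kk k ≤ 2 * K₃ * c kk ^ 2 := by
    intro kk
    have step := Summable.tsum_le_tsum (hHH' kk) (hHsum_k kk) (hH'sum kk)
    rw [Summable.tsum_add (((hSp kk).1).mul_left _) (((hSm kk).1).mul_left _),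
      tsum_mul_left, tsum_mul_left] at step
    have hpos1 : (0:ℝ) ≤ (2:ℝ) ^ ((kk:ℝ) * (-δ) * 2) := Real.rpow_nonneg (by norm_num) _
    have hpos2 : (0:ℝ) ≤ (2:ℝ) ^ ((kk:ℝ) * δ * 2) := Real.rpow_nonneg (by norm_num) _
    have b1 := mul_le_mul_of_nonneg_left (hSp kk).2 hpos1
    have b2 := mul_le_mul_of_nonneg_left (hSm kk).2 hpos2
    have m1 : (2:ℝ) ^ ((kk:ℝ) * (-δ) * 2) * (2:ℝ) ^ ((kk:ℝ) * ((s + δ) - s) * 2) = 1 := by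
      rw [← Real.rpow_add two_pos, show (kk:ℝ) * (-δ) * 2 + (kk:ℝ) * ((s + δ) - s) * 2 = 0 by ring,
        Real.rpow_zero]
    have m2 : (2:ℝ) ^ ((kk:ℝ) * δ * 2) * (2:ℝ) ^ ((kk:ℝ) * ((s - δ) - s) * 2) = 1 := by
      rw [← Real.rpow_add two_pos, show (kk:ℝ) * δ * 2 + (kk:ℝ) * ((s - δ) - s) * 2 = 0 by ring,
        Real.rpow_zero]
    calc ∑' k : Zn n, H kk k
        ≤ (2:ℝ) ^ ((kk:ℝ) * (-δ) * 2) * (∑' k : Zn n, (1 + ‖znR k‖ ^ 2) ^ (s + δ) * ‖f kk k‖ ^ 2)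
          + (2:ℝ) ^ ((kk:ℝ) * δ * 2) * (∑' k : Zn n, (1 + ‖znR k‖ ^ 2) ^ (s - δ) * ‖f kk k‖ ^ 2) := step
      _ ≤ (2:ℝ) ^ ((kk:ℝ) * (-δ) * 2) * (K₃ * ((2:ℝ) ^ ((kk:ℝ) * ((s + δ) - s) * 2) * c kk ^ 2))
          + (2:ℝ) ^ ((kk:ℝ) * δ * 2) * (K₃ * ((2:ℝ) ^ ((kk:ℝ) * ((s - δ) - s) * 2) * c kk ^ 2)) :=
          add_le_add b1 b2
      _ = 2 * K₃ * c kk ^ 2 := by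
          linear_combination (K₃ * c kk ^ 2) * m1 + (K₃ * c kk ^ 2) * m2
  have hHtsum_kk : Summable (fun kk : ℕ => ∑' k : Zn n, H kk k) :=
    Summable.of_nonneg_of_le (fun kk => tsum_nonneg (fun k => hH0 kk k)) hHk_le
      (hcsum.mul_left (2 * K₃))
  have hHprod : Summable (fun p : ℕ × Zn n => H p.1 p.2) :=
    (summable_prod_of_nonneg (fun p => hH0 p.1 p.2)).2 ⟨fun kk => hHsum_k kk, hHtsum_kk⟩
  have hhsum : Summable (fun k : Zn n => ∑' kk : ℕ, H kk k) := by
    have h1 : Summable (fun q : Zn n × ℕ => H q.2 q.1) := hHprod.prod_symm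
    exact h1.prod
  have hswap : ∑' k : Zn n, ∑' kk : ℕ, H kk k = ∑' kk : ℕ, ∑' k : Zn n, H kk k :=
    Summable.tsum_comm hHprod
  have hfinal_sum : Summable (fun k : Zn n => (1 + ‖znR k‖ ^ 2) ^ s * ‖∑' kk : ℕ, f kk k‖ ^ 2) := by
    apply Summable.of_nonneg_of_le ?_ perk (hhsum.mul_left Θ)
    intro k
    exact mul_nonneg (Real.rpow_nonneg (by positivity) _) (sq_nonneg _)
  refine ⟨hconv, hfinal_sum, ?_⟩
  have hlast : ∑' kk : ℕ, ∑' k : Zn n, H kk k ≤ (2 * K₃) * ∑' kk : ℕ, c kk ^ 2 := by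
    calc ∑' kk : ℕ, ∑' k : Zn n, H kk k ≤ ∑' kk : ℕ, 2 * K₃ * c kk ^ 2 :=
          Summable.tsum_le_tsum hHk_le hHtsum_kk (hcsum.mul_left (2 * K₃))
      _ = (2 * K₃) * ∑' kk : ℕ, c kk ^ 2 := tsum_mul_left
  calc HsNormSq s (fun k => ∑' kk : ℕ, f kk k)
      ≤ ∑' k : Zn n, Θ * ∑' kk : ℕ, H kk k := by
        simp only [HsNormSq]
        exact Summable.tsum_le_tsum perk hfinal_sum (hhsum.mul_left Θ)
    _ = Θ * ∑' k : Zn n, ∑' kk : ℕ, H kk k := tsum_mul_left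
    _ = Θ * ∑' kk : ℕ, ∑' k : Zn n, H kk k := by rw [hswap]
    _ ≤ Θ * ((2 * K₃) * ∑' kk : ℕ, c kk ^ 2) := mul_le_mul_of_nonneg_left hlast hΘ0.le
    _ = Θ * (2 * K₃) * ∑' kk : ℕ, c kk ^ 2 := by ring


end
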